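/- Let q = k = 2 and let f : [2]² → {0,1} be the Max-DICUT predicate, f(x,y) = 1 iff x = 2 and y = 1. Then for all γ,β ∈ [0,1], K_γ^Y({f}) ∩ K_β^N({f}) ≠ ∅ if and only if one of the following holds: (a) γ ≤ 1/2 and β ≥ 1/4; (b) 1/2 ≤ γ ≤ 2/3 and β ≥ (1−γ)²/(3−4γ); (c) 2/3 ≤ γ ≤ 1 and β ≥ 2γ−1. -/

import Mathlib

open scoped Classical

/-- `D` is a probability distribution on the finite type `Ω`. -/
def IsDist {Ω : Type*} [Fintype Ω] (D : Ω → ℝ) : Prop :=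
  (∀ x, 0 ≤ D x) ∧ ∑ x, D x = 1

/-- The Max-DICUT predicate on the alphabet `[2] = {1,2}` (encoded as `Fin 2 = {0,1}`
with `1 ↦ 0` and `2 ↦ 1`): `f(x,y) = 1` iff `x = 2` and `y = 1`. -/
def dicut : (Fin 2 → Fin 2) → Bool :=
  fun a => decide (a 0 = 1 ∧ a 1 = 0)

/-- The value `C(f,a)(b)` of the constraint `a` on the assignment `b = (b_{i,σ})`. -/
def cVal (a : Fin 2 → Fin 2) (b : Fin 2 → Fin 2 → Fin 2) : ℝ :=
  if dicut (fun i => b i (a i)) then 1 else 0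

/-- The planted assignment `𝕀` with `𝕀_{i,σ} = σ`. -/
def planted : Fin 2 → Fin 2 → Fin 2 := fun _ σ => σ

/-- The set `S_γ^Y({f})` of YES distributions for Max-DICUT. -/
noncomputable def SYd (γ : ℝ) : Set ((Fin 2 → Fin 2) → ℝ) :=
  {D | IsDist D ∧ γ ≤ ∑ a : Fin 2 → Fin 2, D a * cVal a planted}

/-- The set `S_β^N({f})` of NO distributions for Max-DICUT. -/
noncomputable def SNd (β : ℝ) : Set ((Fin 2 → Fin 2) → ℝ) :=
  {D | IsDist D ∧ ∀ P : Fin 2 → Fin 2 → ℝ, (∀ σ, IsDist (P σ)) →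
    (∑ a : Fin 2 → Fin 2, D a *
      ∑ b : Fin 2 → Fin 2 → Fin 2, (∏ i, ∏ σ, P σ (b i σ)) * cVal a b) ≤ β}

/-- The marginal vector `μ(D)` of a distribution `D` on `[2]²`. -/
noncomputable def marg (D : (Fin 2 → Fin 2) → ℝ) : Fin 2 × Fin 2 → ℝ :=
  fun x => ∑ a : Fin 2 → Fin 2, if a x.1 = x.2 then D a else 0

/-- `K_γ^Y({f})` for Max-DICUT. -/
noncomputable def KYd (γ : ℝ) : Set (Fin 2 × Fin 2 → ℝ) := marg '' SYd γ

/-- `K_β^N({f})` for Max-DICUT. -/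
noncomputable def KNd (β : ℝ) : Set (Fin 2 × Fin 2 → ℝ) := marg '' SNd β

/-! Write `d_{ij} = D ![i, j]`. Against a NO distribution `D`, the independent rounding with
`Pr[b_{i,σ} = 2] = x σ` achieves the quadratic `roundingValue D x`. Sharing marginals with a YES
distribution forces `d₁₀ - d₀₁ ≥ 2γ - 1`, and on the line `x = (p, 1 - p)` this yields the bound
`p (1 - p) + (1 - 2p) (1 - p) (2γ - 1) ≤ β`, which at `p = 1/2`, `(2 - 3γ)/(3 - 4γ)` and `0` gives
the three regimes. Conversely, `(1 - θ, 0, 2θ - 1, 1 - θ)` has the marginals of the YES distribution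
`(0, 1 - θ, θ, 0)`, and the maximum of its rounding value over the unit square is exactly the
threshold at `θ = γ` (at `θ = 1/2` when `γ ≤ 1/2`). -/

lemma sum_fin_two_arrow {α M : Type*} [Fintype α] [AddCommMonoid M] (g : (Fin 2 → α) → M) :
    ∑ f, g f = ∑ x, ∑ y, g ![x, y] := by
  rw [← Equiv.sum_comp (finTwoArrowEquiv α).symm g, Fintype.sum_prod_type]
  rfl

lemma sum_fin_two_arrow_fin_two {M : Type*} [AddCommMonoid M] (g : (Fin 2 → Fin 2) → M) :
    ∑ a, g a = g ![0, 0] + g ![0, 1] + g ![1, 0] + g ![1, 1] := by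
  simp only [sum_fin_two_arrow, Fin.sum_univ_two, add_assoc]

lemma isDist_fin_two_iff {P : Fin 2 → ℝ} : IsDist P ↔ ∃ x ∈ Set.Icc (0 : ℝ) 1, P = ![1 - x, x] := by
  constructor
  · rintro ⟨hP, hsum⟩
    rw [Fin.sum_univ_two] at hsum
    refine ⟨P 1, ⟨hP 1, by linarith [hP 0]⟩, ?_⟩
    ext i; fin_cases i <;> simp; linarith
  · rintro ⟨x, ⟨hx0, hx1⟩, rfl⟩
    refine ⟨fun i => ?_, by simp⟩
    fin_cases i <;> simp <;> linarith

lemma isDist_iff_fin_two_arrow {D : (Fin 2 → Fin 2) → ℝ} :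
    IsDist D ↔ (∀ a, 0 ≤ D a) ∧ D ![0, 0] + D ![0, 1] + D ![1, 0] + D ![1, 1] = 1 := by
  rw [IsDist, sum_fin_two_arrow_fin_two]

lemma IsDist.le_one {Ω : Type*} [Fintype Ω] {D : Ω → ℝ} (hD : IsDist D) (x : Ω) : D x ≤ 1 :=
  hD.2 ▸ Finset.single_le_sum (fun y _ => hD.1 y) (Finset.mem_univ x)

lemma marg_zero (D : (Fin 2 → Fin 2) → ℝ) (σ : Fin 2) : marg D (0, σ) = D ![σ, 0] + D ![σ, 1] := by
  fin_cases σ <;> simp [marg, sum_fin_two_arrow_fin_two]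

lemma marg_one (D : (Fin 2 → Fin 2) → ℝ) (σ : Fin 2) : marg D (1, σ) = D ![0, σ] + D ![1, σ] := by
  fin_cases σ <;> simp [marg, sum_fin_two_arrow_fin_two]

lemma mem_SYd_iff {γ : ℝ} {D : (Fin 2 → Fin 2) → ℝ} : D ∈ SYd γ ↔ IsDist D ∧ γ ≤ D ![1, 0] := by
  simp [SYd, sum_fin_two_arrow_fin_two, cVal, dicut, planted]

/-- The NO value of `D` against the independent rounding with `Pr[b_{i,σ} = 2] = x σ`. -/
def roundingValue (D : (Fin 2 → Fin 2) → ℝ) (x : Fin 2 → ℝ) : ℝ :=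
  ∑ a, D a * (x (a 0) * (1 - x (a 1)))

lemma sum_prod_mul_cVal (x : Fin 2 → ℝ) (a : Fin 2 → Fin 2) :
    ∑ b : Fin 2 → Fin 2 → Fin 2, (∏ i, ∏ σ, ![1 - x σ, x σ] (b i σ)) * cVal a b
      = x (a 0) * (1 - x (a 1)) := by
  obtain ⟨i, j, rfl⟩ : ∃ i j, a = ![i, j] := ⟨a 0, a 1, by ext k; fin_cases k <;> rfl⟩
  simp only [sum_fin_two_arrow, Fin.sum_univ_two, Fin.prod_univ_two, cVal, dicut]
  fin_cases i <;> fin_cases j <;> simp <;> ring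

lemma roundingValue_eq (D : (Fin 2 → Fin 2) → ℝ) (x : Fin 2 → ℝ) :
    roundingValue D x = D ![0, 0] * (x 0 * (1 - x 0)) + D ![0, 1] * (x 0 * (1 - x 1))
      + D ![1, 0] * (x 1 * (1 - x 0)) + D ![1, 1] * (x 1 * (1 - x 1)) := by
  simp [roundingValue, sum_fin_two_arrow_fin_two]

lemma mem_SNd_iff {β : ℝ} {D : (Fin 2 → Fin 2) → ℝ} :
    D ∈ SNd β ↔ IsDist D ∧ ∀ x : Fin 2 → ℝ, (∀ σ, x σ ∈ Set.Icc (0 : ℝ) 1) →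
      roundingValue D x ≤ β := by
  simp only [SNd, Set.mem_ofPred_eq, and_congr_right_iff]
  intro _
  constructor
  · intro h x hx
    simpa only [sum_prod_mul_cVal, roundingValue] using
      h (fun σ => ![1 - x σ, x σ]) fun σ => isDist_fin_two_iff.2 ⟨x σ, hx σ, rfl⟩
  · intro h P hP
    choose x hx hPx using fun σ => isDist_fin_two_iff.1 (hP σ)
    obtain rfl : P = fun σ => ![1 - x σ, x σ] := funext hPx
    simpa only [sum_prod_mul_cVal, roundingValue] using h x hx

lemma exists_mem_SNd_of_inter_nonempty {γ β : ℝ} (h : (KYd γ ∩ KNd β).Nonempty) :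
    ∃ D ∈ SNd β, 2 * γ - 1 ≤ D ![1, 0] - D ![0, 1] := by
  obtain ⟨_, ⟨DY, hY, rfl⟩, DN, hN, hm⟩ := h
  obtain ⟨hYdist, hYγ⟩ := mem_SYd_iff.1 hY
  obtain ⟨hYnonneg, hYsum⟩ := isDist_iff_fin_two_arrow.1 hYdist
  have h01 := congrFun hm (0, 1)
  have h11 := congrFun hm (1, 1)
  simp only [marg_zero, marg_one] at h01 h11
  exact ⟨DN, hN, by linarith [hYnonneg ![0, 0], hYnonneg ![1, 1]]⟩

lemma le_roundingValue_of_le_sub {D : (Fin 2 → Fin 2) → ℝ} (hD : IsDist D) {c p : ℝ}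
    (hc : c ≤ D ![1, 0] - D ![0, 1]) (hp : p ≤ 1 / 2) :
    p * (1 - p) + (1 - 2 * p) * (1 - p) * c ≤ roundingValue D ![p, 1 - p] := by
  obtain ⟨hnonneg, hsum⟩ := isDist_iff_fin_two_arrow.1 hD
  have h2p : 0 ≤ 1 - 2 * p := by linarith
  calc p * (1 - p) + (1 - 2 * p) * (1 - p) * c
      ≤ p * (1 - p)
          + (1 - 2 * p) * ((1 - p) * (D ![1, 0] - D ![0, 1]) + (1 - 2 * p) * D ![0, 1]) := by
        nlinarith [mul_nonneg (mul_nonneg h2p (by linarith : 0 ≤ 1 - p)) (sub_nonneg.2 hc),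
          mul_nonneg (mul_nonneg h2p h2p) (hnonneg ![0, 1])]
    _ = roundingValue D ![p, 1 - p] := by
        rw [roundingValue_eq]
        simp only [Matrix.cons_val_zero, Matrix.cons_val_one]
        linear_combination (-(p * (1 - p))) * hsum

lemma le_of_mem_SNd_of_le_sub {β c : ℝ} {D : (Fin 2 → Fin 2) → ℝ} (hD : D ∈ SNd β)
    (hc : c ≤ D ![1, 0] - D ![0, 1]) {p : ℝ} (hp0 : 0 ≤ p) (hp : p ≤ 1 / 2) :
    p * (1 - p) + (1 - 2 * p) * (1 - p) * c ≤ β := by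
  obtain ⟨hdist, hβ⟩ := mem_SNd_iff.1 hD
  refine (le_roundingValue_of_le_sub hdist hc hp).trans (hβ _ fun σ => ?_)
  fin_cases σ <;> simp <;> constructor <;> linarith

def yesWitness (θ : ℝ) : (Fin 2 → Fin 2) → ℝ :=
  fun a => ![![0, 1 - θ], ![θ, 0]] (a 0) (a 1)

def noWitness (θ : ℝ) : (Fin 2 → Fin 2) → ℝ :=
  fun a => ![![1 - θ, 0], ![2 * θ - 1, 1 - θ]] (a 0) (a 1)

lemma marg_yesWitness (θ : ℝ) : marg (yesWitness θ) = marg (noWitness θ) := by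
  funext ⟨i, σ⟩
  fin_cases i <;> fin_cases σ <;> simp [marg_zero, marg_one, yesWitness, noWitness] <;> ring

lemma yesWitness_mem_SYd {γ θ : ℝ} (hγ : γ ≤ θ) (h0 : 0 ≤ θ) (h1 : θ ≤ 1) :
    yesWitness θ ∈ SYd γ := by
  refine mem_SYd_iff.2 ⟨isDist_iff_fin_two_arrow.2 ⟨fun a => ?_, ?_⟩, by simpa [yesWitness]⟩
  · simp only [yesWitness]
    generalize a 0 = i, a 1 = j
    fin_cases i <;> fin_cases j <;> simp <;> linarith
  · simp [yesWitness]

lemma noWitness_mem_SNd {β θ : ℝ} (h0 : 1 / 2 ≤ θ) (h1 : θ ≤ 1)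
    (hβ : ∀ x : Fin 2 → ℝ, (∀ σ, x σ ∈ Set.Icc (0 : ℝ) 1) → roundingValue (noWitness θ) x ≤ β) :
    noWitness θ ∈ SNd β := by
  refine mem_SNd_iff.2 ⟨isDist_iff_fin_two_arrow.2 ⟨fun a => ?_, ?_⟩, hβ⟩
  · simp only [noWitness]
    generalize a 0 = i, a 1 = j
    fin_cases i <;> fin_cases j <;> simp <;> linarith
  · simp [noWitness]; ring

lemma roundingValue_noWitness (θ : ℝ) (x : Fin 2 → ℝ) :
    roundingValue (noWitness θ) x
      = (1 - θ) * (x 0 * (1 - x 0)) + (2 * θ - 1) * (x 1 * (1 - x 0))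
        + (1 - θ) * (x 1 * (1 - x 1)) := by
  simp [roundingValue_eq, noWitness]

/-- For `θ < 3/4` the value is a concave quadratic in `x`, maximised at
`x = ((2 - 3θ) / (3 - 4θ), (1 - θ) / (3 - 4θ))`. -/
lemma roundingValue_noWitness_le_of_lt {θ : ℝ} (h0 : 1 / 2 ≤ θ) (h1 : θ < 3 / 4) (x : Fin 2 → ℝ) :
    roundingValue (noWitness θ) x ≤ (1 - θ) ^ 2 / (3 - 4 * θ) := by
  have ht : 0 < 3 - 4 * θ := by linarith
  set u := (3 - 4 * θ) * x 0 - (2 - 3 * θ)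
  set v := (3 - 4 * θ) * x 1 - (1 - θ)
  have hsos : (3 - 4 * θ) * ((1 - θ) ^ 2 - (3 - 4 * θ) * roundingValue (noWitness θ) x)
      = ((2 * θ - 1) * (u + v) ^ 2 + (3 - 4 * θ) * (u ^ 2 + v ^ 2)) / 2 := by
    rw [roundingValue_noWitness]; ring
  have : 0 ≤ (1 - θ) ^ 2 - (3 - 4 * θ) * roundingValue (noWitness θ) x := by
    refine nonneg_of_mul_nonneg_right ?_ ht
    rw [hsos]
    have : 0 ≤ 2 * θ - 1 := by linarith
    positivity
  rw [le_div_iff₀ ht]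
  linarith

lemma roundingValue_noWitness_le_of_ge {θ : ℝ} (h0 : 2 / 3 ≤ θ) (h1 : θ ≤ 1) {x : Fin 2 → ℝ}
    (hx : ∀ σ, x σ ∈ Set.Icc (0 : ℝ) 1) :
    roundingValue (noWitness θ) x ≤ 2 * θ - 1 := by
  obtain ⟨hp, -⟩ := hx 0
  obtain ⟨hq0, hq1⟩ := hx 1
  have hsos : 2 * θ - 1 - roundingValue (noWitness θ) x
      = (3 * θ - 2) * (1 - x 1 + x 0 * x 1)
        + (1 - θ) * ((2 * x 0 + x 1 - 1) ^ 2 / 4 + 3 * (x 1 - 1) ^ 2 / 4) := by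
    rw [roundingValue_noWitness]; ring
  have : 0 ≤ 1 - x 1 + x 0 * x 1 := by nlinarith
  have : 0 ≤ 3 * θ - 2 := by linarith
  have : 0 ≤ 1 - θ := by linarith
  have : 0 ≤ 2 * θ - 1 - roundingValue (noWitness θ) x := by rw [hsos]; positivity
  linarith

lemma inter_nonempty_of_roundingValue_noWitness_le {γ β θ : ℝ} (hγ : γ ≤ θ) (h0 : 1 / 2 ≤ θ)
    (h1 : θ ≤ 1)
    (hβ : ∀ x : Fin 2 → ℝ, (∀ σ, x σ ∈ Set.Icc (0 : ℝ) 1) → roundingValue (noWitness θ) x ≤ β) :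
    (KYd γ ∩ KNd β).Nonempty :=
  ⟨marg (yesWitness θ), ⟨_, yesWitness_mem_SYd hγ (by linarith) h1, rfl⟩,
    ⟨_, noWitness_mem_SNd h0 h1 hβ, (marg_yesWitness θ).symm⟩⟩

theorem dicut_intersection_characterization_general (γ β : ℝ) :
    (KYd γ ∩ KNd β).Nonempty ↔
      (γ ≤ 1 / 2 ∧ 1 / 4 ≤ β) ∨
      (1 / 2 ≤ γ ∧ γ ≤ 2 / 3 ∧ (1 - γ) ^ 2 / (3 - 4 * γ) ≤ β) ∨
      (2 / 3 ≤ γ ∧ γ ≤ 1 ∧ 2 * γ - 1 ≤ β) := by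
  constructor
  · intro h
    obtain ⟨D, hD, hc⟩ := exists_mem_SNd_of_inter_nonempty h
    rcases le_or_gt γ (1 / 2) with h1 | h1
    · have := le_of_mem_SNd_of_le_sub hD hc (p := 1 / 2) (by norm_num) le_rfl
      exact Or.inl ⟨h1, by linarith⟩
    rcases le_or_gt γ (2 / 3) with h2 | h2
    · have ht : 0 < 3 - 4 * γ := by linarith
      have := le_of_mem_SNd_of_le_sub hD hc (p := (2 - 3 * γ) / (3 - 4 * γ))
        (div_nonneg (by linarith) ht.le) (by rw [div_le_iff₀ ht]; linarith)
      refine Or.inr (Or.inl ⟨h1.le, h2, le_of_eq_of_le ?_ this⟩)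
      generalize ht' : 3 - 4 * γ = t at ht ⊢
      field_simp
      rw [← ht']
      ring
    · have := le_of_mem_SNd_of_le_sub hD hc le_rfl (by norm_num)
      have hD' := (mem_SNd_iff.1 hD).1
      exact Or.inr (Or.inr ⟨h2.le, by linarith [hD'.le_one ![1, 0], hD'.1 ![0, 1]], by linarith⟩)
  · rintro (⟨h1, h2⟩ | ⟨h1, h2, h3⟩ | ⟨h1, h2, h3⟩)
    · refine inter_nonempty_of_roundingValue_noWitness_le (θ := 1 / 2) h1 le_rfl (by norm_num)
        fun x _ => (roundingValue_noWitness_le_of_lt le_rfl (by norm_num) x).trans ?_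
      norm_num [h2]
    · exact inter_nonempty_of_roundingValue_noWitness_le le_rfl h1 (by linarith)
        fun x _ => (roundingValue_noWitness_le_of_lt h1 (by linarith) x).trans h3
    · exact inter_nonempty_of_roundingValue_noWitness_le le_rfl (by linarith) h2
        fun x hx => (roundingValue_noWitness_le_of_ge h1 h2 hx).trans h3

/-- Example 1 of the paper: a complete description of the pairs `(γ,β)` for which
`K_γ^Y ∩ K_β^N ≠ ∅` for Max-DICUT. -/
theorem dicut_intersection_characterization (γ β : ℝ)
    (hγ : γ ∈ Set.Icc (0 : ℝ) 1) (hβ : β ∈ Set.Icc (0 : ℝ) 1) :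
    (KYd γ ∩ KNd β).Nonempty ↔
      (γ ≤ 1 / 2 ∧ 1 / 4 ≤ β) ∨
      (1 / 2 ≤ γ ∧ γ ≤ 2 / 3 ∧ (1 - γ) ^ 2 / (3 - 4 * γ) ≤ β) ∨
      (2 / 3 ≤ γ ∧ γ ≤ 1 ∧ 2 * γ - 1 ≤ β) :=
  dicut_intersection_characterization_general γ β
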